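/- arXiv:2403.18972 — 8 statements merged into one kernel-verified Lean document; each statement's English description precedes it below -/
import Mathlib

section
/- For a fixed β ∈ (0,1], the Conditional Value-at-Risk CVaR_β is a coherent risk measure on integrable real-valued random variables on a probability space (Ω, F, P): (i) subadditivity: CVaR_β(X + X') ≤ CVaR_β(X) + CVaR_β(X') for all integrable X, X'; (ii) monotonicity: if X(ω) ≤ X'(ω) for all ω ∈ Ω, then CVaR_β(X) ≤ CVaR_β(X'); (iii) translational invariance: CVaR_β(X + c) = CVaR_β(X) + c for all c ∈ ℝ; (iv) positive homogeneity: CVaR_β(c·X) = c·CVaR_β(X) for all c ≥ 0. -/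
open MeasureTheory

/-!
CVaR is the infimum over `z` of the Rockafellar–Uryasev objective `z + E[(X - z)⁺] / β`, and each
coherence property already holds for this objective up to a change of the variable `z`:
`(X + X' - z - z')⁺ ≤ (X - z)⁺ + (X' - z')⁺` gives subadditivity, shifting `z` by `c` gives
translation invariance and scaling `z` by `c > 0` gives positive homogeneity. These facts pass to
the infimum because, for `β ≤ 1`, the objective is bounded below by `E[X]`; the same bound gives
`CVaR_β(0) = 0`, the case `c = 0` of homogeneity.
-/

/-- Conditional Value-at-Risk at level `β`: `CVaR_β(X) := inf_z E[z + (X - z)⁺ / β]`. -/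
noncomputable def CVaR {Ω : Type*} [MeasurableSpace Ω] (P : Measure Ω) (β : ℝ) (X : Ω → ℝ) : ℝ :=
  ⨅ z : ℝ, (z + (∫ ω, max (X ω - z) 0 ∂P) / β)

namespace CVaR

variable {Ω : Type*} [MeasurableSpace Ω] {P : Measure Ω} {β : ℝ} {X Y : Ω → ℝ}

variable (P β X) in
noncomputable def objective (z : ℝ) : ℝ := z + (∫ ω, max (X ω - z) 0 ∂P) / β

variable (P β X) in
theorem eq_iInf_objective : CVaR P β X = ⨅ z, objective P β X z := rfl

theorem integrable_max_sub_const [IsFiniteMeasure P] (hX : Integrable X P) (z : ℝ) :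
    Integrable (fun ω => max (X ω - z) 0) P :=
  (hX.sub (integrable_const z)).pos_part

theorem integral_le_objective [IsProbabilityMeasure P] (hβ0 : 0 < β) (hβ1 : β ≤ 1)
    (hX : Integrable X P) (z : ℝ) : ∫ ω, X ω ∂P ≤ objective P β X z := by
  have hpos : 0 ≤ ∫ ω, max (X ω - z) 0 ∂P := integral_nonneg fun ω => le_max_right _ _
  have hsub : ∫ ω, X ω ∂P - z ≤ ∫ ω, max (X ω - z) 0 ∂P :=
    calc ∫ ω, X ω ∂P - z = ∫ ω, (X ω - z) ∂P := by
          rw [integral_sub hX (integrable_const z), integral_const, probReal_univ, one_smul]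
      _ ≤ ∫ ω, max (X ω - z) 0 ∂P :=
          integral_mono (hX.sub (integrable_const z)) (integrable_max_sub_const hX z)
            fun ω => le_max_left _ _
  have := le_div_self hpos hβ0 hβ1
  unfold objective
  linarith

theorem bddBelow_range_objective [IsProbabilityMeasure P] (hβ0 : 0 < β) (hβ1 : β ≤ 1)
    (hX : Integrable X P) : BddBelow (Set.range (objective P β X)) :=
  ⟨∫ ω, X ω ∂P, Set.forall_mem_range.2 (integral_le_objective hβ0 hβ1 hX)⟩

theorem integral_le_CVaR [IsProbabilityMeasure P] (hβ0 : 0 < β) (hβ1 : β ≤ 1)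
    (hX : Integrable X P) : ∫ ω, X ω ∂P ≤ CVaR P β X :=
  le_ciInf (integral_le_objective hβ0 hβ1 hX)

theorem objective_add_le [IsFiniteMeasure P] (hβ : 0 ≤ β) (hX : Integrable X P)
    (hY : Integrable Y P) (z z' : ℝ) :
    objective P β (fun ω => X ω + Y ω) (z + z') ≤ objective P β X z + objective P β Y z' := by
  have hmax : ∀ ω, max (X ω + Y ω - (z + z')) 0 ≤ max (X ω - z) 0 + max (Y ω - z') 0 := by
    intro ω
    calc max (X ω + Y ω - (z + z')) 0 = max ((X ω - z) + (Y ω - z')) (0 + 0) := by ring_nf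
      _ ≤ max (X ω - z) 0 + max (Y ω - z') 0 := max_add_add_le_max_add_max
  have hint : ∫ ω, max (X ω + Y ω - (z + z')) 0 ∂P
      ≤ ∫ ω, max (X ω - z) 0 ∂P + ∫ ω, max (Y ω - z') 0 ∂P := by
    rw [← integral_add (integrable_max_sub_const hX z) (integrable_max_sub_const hY z')]
    exact integral_mono (integrable_max_sub_const (hX.add hY) _)
      ((integrable_max_sub_const hX z).add (integrable_max_sub_const hY z')) hmax
  have := div_le_div_of_nonneg_right hint hβ
  simp only [objective, add_div] at this ⊢
  linarith

theorem objective_mono [IsFiniteMeasure P] (hβ : 0 ≤ β) (hX : Integrable X P)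
    (hY : Integrable Y P) (hXY : ∀ ω, X ω ≤ Y ω) (z : ℝ) :
    objective P β X z ≤ objective P β Y z := by
  have hint : ∫ ω, max (X ω - z) 0 ∂P ≤ ∫ ω, max (Y ω - z) 0 ∂P :=
    integral_mono (integrable_max_sub_const hX z) (integrable_max_sub_const hY z)
      fun ω => max_le_max (sub_le_sub_right (hXY ω) z) le_rfl
  have := div_le_div_of_nonneg_right hint hβ
  unfold objective
  linarith

theorem objective_add_const (c z : ℝ) :
    objective P β (fun ω => X ω + c) (z + c) = objective P β X z + c := by
  simp only [objective, add_sub_add_right_eq_sub]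
  ring

theorem objective_const_mul {c : ℝ} (hc : 0 < c) (z : ℝ) :
    objective P β (fun ω => c * X ω) (c * z) = c * objective P β X z := by
  have hmax : ∀ ω, max (c * X ω - c * z) 0 = c * max (X ω - z) 0 := fun ω => by
    rw [← mul_sub, mul_max_of_nonneg _ _ hc.le, mul_zero]
  simp only [objective, hmax, integral_const_mul]
  ring

theorem objective_const (c : ℝ) : objective P β (fun _ => c) c = c := by
  simp [objective]

end CVaR

section Coherence

open CVaR

variable {Ω : Type*} [MeasurableSpace Ω] {P : Measure Ω} {β : ℝ} {X Y : Ω → ℝ}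

theorem CVaR_const_mul_of_pos {c : ℝ} (hc : 0 < c) :
    CVaR P β (fun ω => c * X ω) = c * CVaR P β X := by
  rw [eq_iInf_objective, eq_iInf_objective, ← (Equiv.mulLeft₀ c hc.ne').iInf_comp,
    Real.mul_iInf_of_nonneg hc.le]
  exact iInf_congr (objective_const_mul hc)

variable [IsProbabilityMeasure P]

theorem CVaR_add_le (hβ0 : 0 < β) (hβ1 : β ≤ 1) (hX : Integrable X P) (hY : Integrable Y P) :
    CVaR P β (fun ω => X ω + Y ω) ≤ CVaR P β X + CVaR P β Y :=
  le_ciInf_add_ciInf fun z z' =>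
    (ciInf_le (bddBelow_range_objective hβ0 hβ1 (hX.add hY)) (z + z')).trans
      (objective_add_le hβ0.le hX hY z z')

theorem CVaR_mono (hβ0 : 0 < β) (hβ1 : β ≤ 1) (hX : Integrable X P) (hY : Integrable Y P)
    (hXY : ∀ ω, X ω ≤ Y ω) : CVaR P β X ≤ CVaR P β Y :=
  ciInf_mono (bddBelow_range_objective hβ0 hβ1 hX) (objective_mono hβ0.le hX hY hXY)

theorem CVaR_add_const (hβ0 : 0 < β) (hβ1 : β ≤ 1) (hX : Integrable X P) (c : ℝ) :
    CVaR P β (fun ω => X ω + c) = CVaR P β X + c := by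
  rw [eq_iInf_objective, eq_iInf_objective, ← (Equiv.addRight c).iInf_comp,
    ciInf_add (bddBelow_range_objective hβ0 hβ1 hX)]
  exact iInf_congr (objective_add_const c)

theorem CVaR_const (hβ0 : 0 < β) (hβ1 : β ≤ 1) (c : ℝ) : CVaR P β (fun _ => c) = c :=
  le_antisymm ((ciInf_le (bddBelow_range_objective hβ0 hβ1 (integrable_const c)) c).trans_eq
    (objective_const c)) (by simpa using integral_le_CVaR (P := P) hβ0 hβ1 (integrable_const c))

theorem CVaR_const_mul (hβ0 : 0 < β) (hβ1 : β ≤ 1) {c : ℝ} (hc : 0 ≤ c) :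
    CVaR P β (fun ω => c * X ω) = c * CVaR P β X := by
  rcases hc.eq_or_lt with rfl | hc
  · simpa using CVaR_const (P := P) hβ0 hβ1 0
  · exact CVaR_const_mul_of_pos hc

end Coherence

/-- `CVaR_β` is a coherent risk measure on integrable random variables:
subadditive, monotone, translationally invariant and positively homogeneous. -/
theorem stmt_5 {Ω : Type*} [MeasurableSpace Ω] (P : Measure Ω) [IsProbabilityMeasure P]
    {β : ℝ} (hβ : β ∈ Set.Ioc (0 : ℝ) 1) :
    (∀ X X' : Ω → ℝ, Integrable X P → Integrable X' P →
      CVaR P β (fun ω => X ω + X' ω) ≤ CVaR P β X + CVaR P β X') ∧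
    (∀ X X' : Ω → ℝ, Integrable X P → Integrable X' P → (∀ ω, X ω ≤ X' ω) →
      CVaR P β X ≤ CVaR P β X') ∧
    (∀ X : Ω → ℝ, Integrable X P → ∀ c : ℝ,
      CVaR P β (fun ω => X ω + c) = CVaR P β X + c) ∧
    (∀ X : Ω → ℝ, Integrable X P → ∀ c : ℝ, 0 ≤ c →
      CVaR P β (fun ω => c * X ω) = c * CVaR P β X) := by
  obtain ⟨hβ0, hβ1⟩ := hβ
  exact ⟨fun _ _ hX hX' => CVaR_add_le hβ0 hβ1 hX hX',
    fun _ _ hX hX' hle => CVaR_mono hβ0 hβ1 hX hX' hle,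
    fun _ hX c => CVaR_add_const hβ0 hβ1 hX c,
    fun _ _ _ hc => CVaR_const_mul hβ0 hβ1 hc⟩
end

section
/- Let X be an integrable real-valued random variable on a probability space (Ω, F, P) and β ∈ (0,1). Then the infimum defining CVaR_β(X) is attained at z = VaR_β(X); that is, CVaR_β(X) = VaR_β(X) + (1/β)·E[max(X − VaR_β(X), 0)]. -/
/-!
`f z = z + E[(X - z)⁺] / β` is convex, and `1 - P(A) / β` is a subgradient of `f` at `v` for every
event `{v < X} ⊆ A ⊆ {v ≤ X}`. Let `F` be the distribution function of `X`. Since `v = VaR_β(X)` is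
the least `z` with `1 - β ≤ F z` (attained by right continuity of `F`), we get
`P(X > v) = 1 - F v ≤ β ≤ 1 - F (v⁻) = P(X ≥ v)`, so `0` is a subgradient of `f` at `v` and `v`
minimizes `f`.
-/

open MeasureTheory

/-- Value-at-Risk at level `β`: `VaR_β(X) := inf {z : P(X ≤ z) ≥ 1 - β}`. -/
noncomputable def VaR {Ω : Type*} [MeasurableSpace Ω] (P : Measure Ω) (β : ℝ) (X : Ω → ℝ) : ℝ :=
  sInf {z : ℝ | ENNReal.ofReal (1 - β) ≤ P {ω | X ω ≤ z}}

open ProbabilityTheory Set Filter Topology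

noncomputable def StieltjesFunction.quantile (F : StieltjesFunction ℝ) (q : ℝ) : ℝ :=
  sInf {z | q ≤ F z}

namespace StieltjesFunction

variable (F : StieltjesFunction ℝ) {q : ℝ}

lemma bddBelow_setOf_le {a : ℝ} (ha : Tendsto F atBot (𝓝 a)) (haq : a < q) :
    BddBelow {z | q ≤ F z} := by
  obtain ⟨m, hm⟩ := eventually_atBot.1 (ha.eventually (eventually_lt_nhds haq))
  exact ⟨m, fun z hz => le_of_not_gt fun hzm => (hm z hzm.le).not_ge hz⟩

lemma le_apply_quantile {b : ℝ} (hb : Tendsto F atTop (𝓝 b)) (hqb : q < b) :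
    q ≤ F (F.quantile q) := by
  have hne : {z | q ≤ F z}.Nonempty :=
    (hb.eventually (eventually_gt_nhds hqb)).exists.imp fun _ => le_of_lt
  have hright : Tendsto F (𝓝[>] F.quantile q) (𝓝 (F (F.quantile q))) :=
    (F.right_continuous _).tendsto.mono_left (nhdsWithin_mono _ Ioi_subset_Ici_self)
  refine ge_of_tendsto hright (eventually_nhdsWithin_of_forall fun t ht => ?_)
  obtain ⟨s, hs, hst⟩ := exists_lt_of_csInf_lt hne ht
  exact hs.trans (F.mono hst.le)

lemma leftLim_quantile_le {a : ℝ} (ha : Tendsto F atBot (𝓝 a)) (haq : a < q) :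
    Function.leftLim F (F.quantile q) ≤ q :=
  le_of_tendsto (F.mono.tendsto_leftLim _) <| eventually_nhdsWithin_of_forall fun _ ht =>
    le_of_lt <| not_le.1 <|
      notMem_of_lt_csInf (s := {z | q ≤ F z}) ht (F.bddBelow_setOf_le ha haq)

end StieltjesFunction

section Tails

variable {Ω : Type*} [MeasurableSpace Ω] {P : Measure Ω} [IsProbabilityMeasure P]
  {X : Ω → ℝ}

lemma measureReal_lt_eq_one_sub_cdf (hX : Measurable X) (x : ℝ) :
    P.real {ω | x < X ω} = 1 - cdf (P.map X) x := by
  have := Measure.isProbabilityMeasure_map (μ := P) hX.aemeasurable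
  rw [cdf_eq_real, ← probReal_compl_eq_one_sub measurableSet_Iic, compl_Iic,
    map_measureReal_apply hX measurableSet_Ioi]
  rfl

lemma measureReal_le_eq_one_sub_leftLim_cdf (hX : Measurable X) (x : ℝ) :
    P.real {ω | x ≤ X ω} = 1 - Function.leftLim (cdf (P.map X)) x := by
  have := Measure.isProbabilityMeasure_map (μ := P) hX.aemeasurable
  have hIci := (cdf (P.map X)).measure_Ici (tendsto_cdf_atTop _) x
  rw [measure_cdf] at hIci
  have hleftLim_le_one : Function.leftLim (cdf (P.map X)) x ≤ 1 :=
    ((monotone_cdf _).leftLim_le le_rfl).trans (cdf_le_one _ _)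
  change P.real (X ⁻¹' Ici x) = _
  rw [← map_measureReal_apply hX measurableSet_Ici, measureReal_def, hIci,
    ENNReal.toReal_ofReal (sub_nonneg.2 hleftLim_le_one)]

end Tails

section CVaR

variable {Ω : Type*} [MeasurableSpace Ω] {P : Measure Ω} {X : Ω → ℝ} {β : ℝ}

lemma VaR_eq_quantile_cdf [IsProbabilityMeasure P] (hX : Measurable X) :
    VaR P β X = (cdf (P.map X)).quantile (1 - β) := by
  have := Measure.isProbabilityMeasure_map (μ := P) hX.aemeasurable
  refine congrArg sInf (Set.ext fun z => ?_)
  change _ ≤ P (X ⁻¹' Iic z) ↔ _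
  rw [← Measure.map_apply hX measurableSet_Iic, ← ofReal_cdf,
    ENNReal.ofReal_le_ofReal_iff (cdf_nonneg _ _)]
  rfl

lemma measureReal_VaR_lt_le [IsProbabilityMeasure P] (hX : Measurable X) (hβ : β ∈ Ioo 0 1) :
    P.real {ω | VaR P β X < X ω} ≤ β := by
  rw [measureReal_lt_eq_one_sub_cdf hX, VaR_eq_quantile_cdf hX]
  have := (cdf (P.map X)).le_apply_quantile (tendsto_cdf_atTop _) (q := 1 - β)
    (by linarith [hβ.1])
  linarith

lemma le_measureReal_VaR_le [IsProbabilityMeasure P] (hX : Measurable X) (hβ : β ∈ Ioo 0 1) :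
    β ≤ P.real {ω | VaR P β X ≤ X ω} := by
  rw [measureReal_le_eq_one_sub_leftLim_cdf hX, VaR_eq_quantile_cdf hX]
  have := (cdf (P.map X)).leftLim_quantile_le (tendsto_cdf_atBot _) (q := 1 - β)
    (by linarith [hβ.2])
  linarith

lemma integral_posPart_sub_add_mul_le [IsFiniteMeasure P] (hint : Integrable X P) {v : ℝ}
    {A : Set Ω} (hA : MeasurableSet A) (hA_lt : {ω | v < X ω} ⊆ A) (hA_le : A ⊆ {ω | v ≤ X ω})
    (z : ℝ) :
    ∫ ω, max (X ω - v) 0 ∂P + (v - z) * P.real A ≤ ∫ ω, max (X ω - z) 0 ∂P := by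
  have hpos : ∀ c, Integrable (fun ω => max (X ω - c) 0) P := fun c =>
    (hint.sub (integrable_const c)).pos_part
  rw [mul_comm, ← smul_eq_mul, ← integral_indicator_const _ hA,
    ← integral_add (hpos v) ((integrable_const _).indicator hA)]
  refine integral_mono ((hpos v).add ((integrable_const _).indicator hA)) (hpos z) fun ω => ?_
  by_cases hω : ω ∈ A
  · have hvX : v ≤ X ω := hA_le hω
    simp only [indicator_of_mem hω, max_eq_left (sub_nonneg.2 hvX)]
    exact le_max_of_le_left (by linarith)
  · have hXv : X ω ≤ v := not_lt.1 fun h : v < X ω => hω (hA_lt h)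
    simp only [indicator_of_notMem hω, max_eq_right (sub_nonpos.2 hXv), add_zero]
    exact le_max_right _ _

lemma VaR_add_le [IsProbabilityMeasure P] (hX : Measurable X) (hint : Integrable X P)
    (hβ : β ∈ Ioo 0 1) (z : ℝ) :
    VaR P β X + (∫ ω, max (X ω - VaR P β X) 0 ∂P) / β ≤ z + (∫ ω, max (X ω - z) 0 ∂P) / β := by
  set v := VaR P β X
  obtain ⟨A, hA, hA_lt, hA_le, hβA⟩ : ∃ A : Set Ω, MeasurableSet A ∧ {ω | v < X ω} ⊆ A ∧
      A ⊆ {ω | v ≤ X ω} ∧ (v - z) * β ≤ (v - z) * P.real A := by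
    rcases le_total z v with hzv | hvz
    · exact ⟨{ω | v ≤ X ω}, measurableSet_le measurable_const hX,
        ofPred_subset_ofPred.2 fun _ => le_of_lt, subset_rfl,
        mul_le_mul_of_nonneg_left (le_measureReal_VaR_le hX hβ) (sub_nonneg.2 hzv)⟩
    · exact ⟨{ω | v < X ω}, measurableSet_lt measurable_const hX, subset_rfl,
        ofPred_subset_ofPred.2 fun _ => le_of_lt,
        mul_le_mul_of_nonpos_left (measureReal_VaR_lt_le hX hβ) (sub_nonpos.2 hvz)⟩
  have hsub := integral_posPart_sub_add_mul_le hint hA hA_lt hA_le z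
  have hgap : z + (∫ ω, max (X ω - z) 0 ∂P) / β - (v + (∫ ω, max (X ω - v) 0 ∂P) / β) =
      (∫ ω, max (X ω - z) 0 ∂P - ∫ ω, max (X ω - v) 0 ∂P - (v - z) * β) / β := by
    field_simp [hβ.1.ne']
    ring
  rw [← sub_nonneg, hgap]
  exact div_nonneg (by linarith) hβ.1.le

end CVaR

/-- The infimum defining `CVaR_β(X)` is attained at `z = VaR_β(X)`:
`CVaR_β(X) = VaR_β(X) + (1/β) E[(X - VaR_β(X))⁺]`. -/
theorem stmt_7 {Ω : Type*} [MeasurableSpace Ω] (P : Measure Ω) [IsProbabilityMeasure P]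
    (X : Ω → ℝ) (hX : Measurable X) (hint : Integrable X P)
    {β : ℝ} (hβ : β ∈ Set.Ioo (0 : ℝ) 1) :
    CVaR P β X = VaR P β X + (1 / β) * ∫ ω, max (X ω - VaR P β X) 0 ∂P := by
  have hmin := VaR_add_le hX hint hβ
  have hCVaR : CVaR P β X = VaR P β X + (∫ ω, max (X ω - VaR P β X) 0 ∂P) / β :=
    le_antisymm (ciInf_le ⟨_, forall_mem_range.2 hmin⟩ _) (le_ciInf hmin)
  rw [hCVaR, one_div_mul_eq_div]
end

section
/- Let X be an integrable real-valued random variable on a probability space (Ω, F, P) and β ∈ (0,1), and suppose P(X ≥ VaR_β(X)) = β. Then CVaR_β(X) = (1/β)·E[X·1_{X ≥ VaR_β(X)}]; that is, CVaR_β(X) equals the expectation of X conditioned on the event X ≥ VaR_β(X). -/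
/-!
For every `z` one has the pointwise bound `1_{X ≥ v} (v - z) + (X - v)⁺ ≤ (X - z)⁺`. Integrating it,
and using `P(X ≥ v) = β`, shows that `z ↦ z + E[(X - z)⁺] / β` attains its infimum at `z = v`,
where its value is `E[X · 1_{X ≥ v}] / β` because `(X - v)⁺ = 1_{X ≥ v} (X - v)`.
-/

open MeasureTheory

lemma indicator_sub_add_max_sub_le (v z x : ℝ) :
    {y : ℝ | v ≤ y}.indicator (fun _ => v - z) x + max (x - v) 0 ≤ max (x - z) 0 := by
  by_cases h : v ≤ x
  · rw [Set.indicator_of_mem (show x ∈ {y : ℝ | v ≤ y} from h), max_eq_left (by linarith)]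
    linarith [le_max_left (x - z) 0]
  · rw [Set.indicator_of_notMem (show x ∉ {y : ℝ | v ≤ y} from h), max_eq_right (by linarith)]
    simp

section

variable {Ω : Type*} [MeasurableSpace Ω] {μ : Measure Ω} [IsFiniteMeasure μ] {X : Ω → ℝ}

lemma integrable_max_sub (hint : Integrable X μ) (z : ℝ) :
    Integrable (fun ω => max (X ω - z) 0) μ :=
  (hint.sub (integrable_const z)).pos_part

lemma integral_max_sub_eq (hX : Measurable X) (hint : Integrable X μ) (v : ℝ) :
    ∫ ω, max (X ω - v) 0 ∂μ = ∫ ω in {ω | v ≤ X ω}, X ω ∂μ - v * μ.real {ω | v ≤ X ω} := by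
  have hS : MeasurableSet {ω | v ≤ X ω} := hX measurableSet_Ici
  have hpos : (fun ω => max (X ω - v) 0) = {ω | v ≤ X ω}.indicator (fun ω => X ω - v) := by
    funext ω
    by_cases h : v ≤ X ω
    · rw [Set.indicator_of_mem (show ω ∈ {ω | v ≤ X ω} from h), max_eq_left (by linarith)]
    · rw [Set.indicator_of_notMem (show ω ∉ {ω | v ≤ X ω} from h), max_eq_right (by linarith)]
  rw [hpos, integral_indicator hS, integral_sub hint.integrableOn integrableOn_const,
    setIntegral_const, smul_eq_mul, mul_comm]

lemma integral_max_sub_le (hX : Measurable X) (hint : Integrable X μ) (v z : ℝ) :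
    (v - z) * μ.real {ω | v ≤ X ω} + ∫ ω, max (X ω - v) 0 ∂μ ≤ ∫ ω, max (X ω - z) 0 ∂μ := by
  have hS : MeasurableSet {ω | v ≤ X ω} := hX measurableSet_Ici
  have hind : Integrable ({ω | v ≤ X ω}.indicator fun _ => v - z) μ :=
    (integrable_const _).indicator hS
  have hmono : ∫ ω, ({ω | v ≤ X ω}.indicator (fun _ => v - z) ω + max (X ω - v) 0) ∂μ ≤
      ∫ ω, max (X ω - z) 0 ∂μ :=
    integral_mono (hind.add (integrable_max_sub hint v)) (integrable_max_sub hint z)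
      fun ω => indicator_sub_add_max_sub_le v z (X ω)
  rwa [integral_add hind (integrable_max_sub hint v), integral_indicator hS, setIntegral_const,
    smul_eq_mul, mul_comm] at hmono

lemma CVaR_eq_setIntegral_of_measureReal_eq (hX : Measurable X) (hint : Integrable X μ)
    {β v : ℝ} (hβ : 0 < β) (hv : μ.real {ω | v ≤ X ω} = β) :
    CVaR μ β X = (1 / β) * ∫ ω in {ω | v ≤ X ω}, X ω ∂μ := by
  have hvalue : v + (∫ ω, max (X ω - v) 0 ∂μ) / β = (1 / β) * ∫ ω in {ω | v ≤ X ω}, X ω ∂μ := by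
    rw [integral_max_sub_eq hX hint, hv]
    field_simp
    ring
  have hmin : ∀ z, v + (∫ ω, max (X ω - v) 0 ∂μ) / β ≤ z + (∫ ω, max (X ω - z) 0 ∂μ) / β := by
    intro z
    have h := integral_max_sub_le hX hint v z
    rw [hv] at h
    rw [add_div' _ _ _ hβ.ne', add_div' _ _ _ hβ.ne']
    exact div_le_div_of_nonneg_right (by linarith) hβ.le
  have hleast : IsLeast (Set.range fun z => z + (∫ ω, max (X ω - z) 0 ∂μ) / β)
      (v + (∫ ω, max (X ω - v) 0 ∂μ) / β) :=
    ⟨⟨v, rfl⟩, by rintro _ ⟨z, rfl⟩; exact hmin z⟩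
  rw [CVaR, hleast.isGLB.ciInf_eq, hvalue]

end

/-- If `P(X ≥ VaR_β(X)) = β`, then `CVaR_β(X) = (1/β) E[X · 1_{X ≥ VaR_β(X)}]`. -/
theorem stmt_8 {Ω : Type*} [MeasurableSpace Ω] (P : Measure Ω) [IsProbabilityMeasure P]
    (X : Ω → ℝ) (hX : Measurable X) (hint : Integrable X P)
    {β : ℝ} (hβ : β ∈ Set.Ioo (0 : ℝ) 1)
    (hP : P {ω | VaR P β X ≤ X ω} = ENNReal.ofReal β) :
    CVaR P β X = (1 / β) * ∫ ω in {ω | VaR P β X ≤ X ω}, X ω ∂P :=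
  CVaR_eq_setIntegral_of_measureReal_eq hX hint hβ.1
    (by rw [measureReal_def, hP, ENNReal.toReal_ofReal hβ.1.le])
end

section
/- Let X be a real-valued random variable on a probability space (Ω, F, P) with E[exp(zX)] < ∞ for all z > 0, and let β ∈ (0,1). Then VaR_β(X) ≤ EVaR_β(X). -/
open MeasureTheory

/-- Entropic Value-at-Risk at level `β`: `EVaR_β(X) := inf_{z > 0} z⁻¹ ln (E[exp (z X)] / β)`. -/
noncomputable def EVaR {Ω : Type*} [MeasurableSpace Ω] (P : Measure Ω) (β : ℝ) (X : Ω → ℝ) : ℝ :=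
  ⨅ z : Set.Ioi (0 : ℝ), ((z : ℝ)⁻¹ * Real.log ((∫ ω, Real.exp ((z : ℝ) * X ω) ∂P) / β))

/-- `VaR_β(X) ≤ EVaR_β(X)` for `β ∈ (0,1)` when the mgf of `X` is finite on `(0,∞)`. -/
theorem stmt_10 {Ω : Type*} [MeasurableSpace Ω] (P : Measure Ω) [IsProbabilityMeasure P]
    (X : Ω → ℝ) (hX : Measurable X)
    (hmgf : ∀ z : ℝ, 0 < z → Integrable (fun ω => Real.exp (z * X ω)) P)
    {β : ℝ} (hβ : β ∈ Set.Ioo (0 : ℝ) 1) :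
    VaR P β X ≤ EVaR P β X := by
  obtain ⟨hβ0, hβ1⟩ := hβ
  set S : Set ℝ := {z : ℝ | ENNReal.ofReal (1 - β) ≤ P {ω | X ω ≤ z}} with hS
  -- S is bounded below
  have hbdd : BddBelow S := by
    by_contra hnb
    -- then for every n there is z ∈ S with z < -n
    have hseq : ∀ n : ℕ, ENNReal.ofReal (1 - β) ≤ P {ω | X ω ≤ -(n : ℝ)} := by
      intro n
      obtain ⟨z, hz, hzn⟩ : ∃ z ∈ S, z < -(n : ℝ) := by
        by_contra h
        push_neg at h
        exact hnb ⟨-(n : ℝ), fun z hz => (h z hz)⟩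
      exact le_trans hz (measure_mono fun ω hω => le_trans hω hzn.le)
    have htend : Filter.Tendsto (fun n : ℕ => P {ω | X ω ≤ -(n : ℝ)}) Filter.atTop
        (nhds (P (⋂ n : ℕ, {ω | X ω ≤ -(n : ℝ)}))) :=
      tendsto_measure_iInter_atTop
        (fun n => (hX measurableSet_Iic).nullMeasurableSet)
        (fun n m hnm ω hω => by
          simp only [Set.mem_setOf_eq] at hω ⊢
          have : (n : ℝ) ≤ m := Nat.cast_le.mpr hnm
          linarith)
        ⟨0, measure_ne_top _ _⟩
    have hempty : (⋂ n : ℕ, {ω | X ω ≤ -(n : ℝ)}) = ∅ := by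
      ext ω
      simp only [Set.mem_iInter, Set.mem_setOf_eq, Set.mem_empty_iff_false, iff_false]
      push_neg
      obtain ⟨n, hn⟩ := exists_nat_gt (-(X ω))
      exact ⟨n, by linarith⟩
    rw [hempty, measure_empty] at htend
    have := ge_of_tendsto htend (Filter.Eventually.of_forall hseq)
    simp only [le_zero_iff, ENNReal.ofReal_eq_zero] at this
    linarith
  -- VaR ≤ each term of the infimum
  have hle : ∀ z : Set.Ioi (0 : ℝ), VaR P β X ≤
      (z : ℝ)⁻¹ * Real.log ((∫ ω, Real.exp ((z : ℝ) * X ω) ∂P) / β) := by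
    rintro ⟨z, hz⟩
    simp only [Set.mem_Ioi] at hz
    set I : ℝ := ∫ ω, Real.exp (z * X ω) ∂P with hI
    have hint := hmgf z hz
    have hIpos : 0 < I := integral_exp_pos hint
    set t : ℝ := z⁻¹ * Real.log (I / β) with ht
    have hzt : z * t = Real.log (I / β) := by
      rw [ht]; field_simp
    -- Chernoff bound
    have hcher := ProbabilityTheory.measure_ge_le_exp_mul_mgf (X := X) (μ := P) t hz.le hint
    rw [ProbabilityTheory.mgf] at hcher
    have hexp : Real.exp (-z * t) * I = β := by
      rw [neg_mul, hzt, Real.exp_neg, Real.exp_log (div_pos hIpos hβ0)]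
      field_simp
    rw [hexp] at hcher
    -- hence P {X ≤ t} ≥ 1 - β
    have hmem : t ∈ S := by
      have hcompl : {ω | X ω ≤ t} = {ω | t < X ω}ᶜ := by
        ext ω; simp [not_lt]
      have hsub : P {ω | t < X ω} ≤ P {ω | t ≤ X ω} :=
        measure_mono fun ω hω => by
          simp only [Set.mem_setOf_eq] at hω ⊢; exact hω.le
      have hfin : (P {ω | t < X ω}).toReal ≤ β :=
        le_trans (ENNReal.toReal_mono (measure_ne_top _ _) hsub) hcher
      have hle1 : P {ω | t < X ω} ≤ 1 := prob_le_one
      have h1 : ENNReal.ofReal (1 - β) ≤ 1 - P {ω | t < X ω} :=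
        ENNReal.ofReal_le_of_le_toReal (by
          rw [ENNReal.toReal_sub_of_le hle1 ENNReal.one_ne_top, ENNReal.toReal_one]
          linarith)
      rw [hS, Set.mem_setOf_eq, hcompl, measure_compl (measurableSet_lt measurable_const hX) (measure_ne_top _ _),
        measure_univ]
      exact h1
    exact csInf_le hbdd hmem
  have : Nonempty (Set.Ioi (0 : ℝ)) := ⟨⟨1, by norm_num⟩⟩
  exact le_ciInf hle
end

section
/- Let X be an integrable real-valued random variable on a probability space (Ω, F, P) with E[exp(zX)] < ∞ for all z > 0, and let β ∈ (0,1). Then CVaR_β(X) ≤ EVaR_β(X); that is, the Entropic Value-at-Risk is an upper bound for the Conditional Value-at-Risk. -/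
open MeasureTheory

/-!
Every candidate in the `CVaR` infimum is at least `E[X]` when `β ≤ 1`, so the infimum is a genuine
one. For fixed `z > 0` the elementary bound `t⁺ ≤ exp (t - 1)`, applied to `t = z (X - w)`, gives
`E[(X - w)⁺] ≤ exp (-z w - 1) E[exp (z X)] / z`. Choosing the threshold
`w = z⁻¹ (log (E[exp (z X)] / β) - 1)` makes the right-hand side `β / z`, so the `CVaR` candidate
at `w` equals `z⁻¹ log (E[exp (z X)] / β)`, the `EVaR` candidate at `z`.
-/

open Real

lemma max_zero_le_exp_sub_one (t : ℝ) : max t 0 ≤ exp (t - 1) :=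
  max_le (by linarith [add_one_le_exp (t - 1)]) (exp_pos _).le

lemma integral_max_sub_zero_le {Ω : Type*} [MeasurableSpace Ω] {μ : Measure Ω} {X : Ω → ℝ}
    {z : ℝ} (hz : 0 < z) (hexp : Integrable (fun ω => exp (z * X ω)) μ) (w : ℝ) :
    ∫ ω, max (X ω - w) 0 ∂μ ≤ exp (-(z * w) - 1) * (∫ ω, exp (z * X ω) ∂μ) / z := by
  have hpt : ∀ ω, max (X ω - w) 0 ≤ exp (-(z * w) - 1) * exp (z * X ω) / z := fun ω => by
    calc max (X ω - w) 0 = max (z * (X ω - w)) 0 / z := by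
          rw [← max_div_div_right hz.le, mul_div_cancel_left₀ _ hz.ne', zero_div]
      _ ≤ exp (z * (X ω - w) - 1) / z := by gcongr; exact max_zero_le_exp_sub_one _
      _ = exp (-(z * w) - 1) * exp (z * X ω) / z := by rw [← exp_add]; ring_nf
  calc ∫ ω, max (X ω - w) 0 ∂μ ≤ ∫ ω, exp (-(z * w) - 1) * exp (z * X ω) / z ∂μ :=
        integral_mono_of_nonneg (.of_forall fun ω => le_max_right _ _)
          ((hexp.const_mul _).div_const _) (.of_forall hpt)
    _ = exp (-(z * w) - 1) * (∫ ω, exp (z * X ω) ∂μ) / z := by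
        rw [integral_div, integral_const_mul]

lemma integral_le_add_integral_max_sub_zero_div {Ω : Type*} [MeasurableSpace Ω] {P : Measure Ω}
    [IsProbabilityMeasure P] {X : Ω → ℝ} (hint : Integrable X P) {β : ℝ} (hβ0 : 0 < β)
    (hβ1 : β ≤ 1) (c : ℝ) :
    ∫ ω, X ω ∂P ≤ c + (∫ ω, max (X ω - c) 0 ∂P) / β := by
  have hsub : ∫ ω, X ω ∂P - c ≤ ∫ ω, max (X ω - c) 0 ∂P := by
    calc ∫ ω, X ω ∂P - c = ∫ ω, X ω - c ∂P := by
          rw [integral_sub hint (integrable_const c), integral_const, probReal_univ, one_smul]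
      _ ≤ ∫ ω, max (X ω - c) 0 ∂P :=
          integral_mono (hint.sub (integrable_const c)) (hint.sub (integrable_const c)).pos_part
            fun ω => le_max_left _ _
  have hdiv : ∫ ω, max (X ω - c) 0 ∂P ≤ (∫ ω, max (X ω - c) 0 ∂P) / β :=
    le_div_self (integral_nonneg fun ω => le_max_right _ _) hβ0 hβ1
  linarith

lemma CVaR_le_add_integral_max_sub_zero_div {Ω : Type*} [MeasurableSpace Ω] {P : Measure Ω}
    [IsProbabilityMeasure P] {X : Ω → ℝ} (hint : Integrable X P) {β : ℝ} (hβ0 : 0 < β)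
    (hβ1 : β ≤ 1) (c : ℝ) :
    CVaR P β X ≤ c + (∫ ω, max (X ω - c) 0 ∂P) / β :=
  ciInf_le ⟨∫ ω, X ω ∂P, Set.forall_mem_range.2
    (integral_le_add_integral_max_sub_zero_div hint hβ0 hβ1)⟩ c

lemma CVaR_le_inv_mul_log_integral_exp_div {Ω : Type*} [MeasurableSpace Ω] {P : Measure Ω}
    [IsProbabilityMeasure P] {X : Ω → ℝ} (hint : Integrable X P) {β : ℝ} (hβ0 : 0 < β)
    (hβ1 : β ≤ 1) {z : ℝ} (hz : 0 < z) (hexp : Integrable (fun ω => exp (z * X ω)) P) :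
    CVaR P β X ≤ z⁻¹ * log ((∫ ω, exp (z * X ω) ∂P) / β) := by
  set M := ∫ ω, exp (z * X ω) ∂P
  have hM : 0 < M := integral_exp_pos hexp
  set w := z⁻¹ * (log (M / β) - 1) with hw
  have hscale : exp (-(z * w) - 1) = β / M := by
    rw [show -(z * w) - 1 = -log (M / β) by rw [hw]; field_simp; ring, exp_neg,
      exp_log (div_pos hM hβ0), inv_div]
  have htail : ∫ ω, max (X ω - w) 0 ∂P ≤ β / z := by
    have := integral_max_sub_zero_le hz hexp w
    rwa [hscale, div_mul_cancel₀ _ hM.ne'] at this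
  calc CVaR P β X ≤ w + (∫ ω, max (X ω - w) 0 ∂P) / β :=
        CVaR_le_add_integral_max_sub_zero_div hint hβ0 hβ1 w
    _ ≤ w + β / z / β := by gcongr
    _ = z⁻¹ * log (M / β) := by rw [hw]; field_simp; ring

theorem stmt_11_general {Ω : Type*} [MeasurableSpace Ω] (P : Measure Ω) [IsProbabilityMeasure P]
    (X : Ω → ℝ) (hint : Integrable X P)
    (hmgf : ∀ z : ℝ, 0 < z → Integrable (fun ω => Real.exp (z * X ω)) P)
    {β : ℝ} (hβ : β ∈ Set.Ioo (0 : ℝ) 1) :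
    CVaR P β X ≤ EVaR P β X :=
  le_ciInf fun ⟨z, hz⟩ =>
    CVaR_le_inv_mul_log_integral_exp_div hint hβ.1 hβ.2.le hz (hmgf z hz)

/-- `CVaR_β(X) ≤ EVaR_β(X)` for integrable `X` with finite mgf on `(0,∞)` and `β ∈ (0,1)`. -/
theorem stmt_11 {Ω : Type*} [MeasurableSpace Ω] (P : Measure Ω) [IsProbabilityMeasure P]
    (X : Ω → ℝ) (hX : Measurable X) (hint : Integrable X P)
    (hmgf : ∀ z : ℝ, 0 < z → Integrable (fun ω => Real.exp (z * X ω)) P)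
    {β : ℝ} (hβ : β ∈ Set.Ioo (0 : ℝ) 1) :
    CVaR P β X ≤ EVaR P β X :=
  stmt_11_general P X hint hmgf hβ
end

section
/- Let X be an essentially bounded real-valued random variable on a probability space (Ω, F, P). Then lim_{β → 0⁺} EVaR_β(X) = esssup(X), where esssup(X) denotes the essential supremum of X with respect to P. -/
open MeasureTheory

/-!
If `X ≤ M` a.e. then `E[exp (z X)] ≤ exp (z M)`, so every term of the infimum is at most
`M + z⁻¹ log β⁻¹`, and letting `z → ∞` gives `EVaR_β(X) ≤ M` for every `β > 0`. Conversely, the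
Chernoff bound `P(X ≥ a) ≤ exp (-z a) E[exp (z X)]` shows that every term is at least `a` as soon as
`β ≤ P(X ≥ a)`. For `a < esssup X` this probability is positive, so for small `β` the value
`EVaR_β(X)` is squeezed between `a` and `esssup X`.
-/

open Filter Topology Real ProbabilityTheory

section EVaR

variable {Ω : Type*} [MeasurableSpace Ω] {P : Measure Ω} {X : Ω → ℝ} {β a z : ℝ}

lemma EVaR_eq_iInf_mgf (P : Measure Ω) (β : ℝ) (X : Ω → ℝ) :
    EVaR P β X = ⨅ z : Set.Ioi (0 : ℝ), (z : ℝ)⁻¹ * log (mgf X P z / β) :=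
  rfl

lemma le_inv_mul_log_mgf_div [IsFiniteMeasure P] (hz : 0 < z) (hβ : 0 < β)
    (hβa : β ≤ P.real {ω | a ≤ X ω}) (hint : Integrable (fun ω ↦ exp (z * X ω)) P) :
    a ≤ z⁻¹ * log (mgf X P z / β) := by
  have chernoff : β ≤ exp (-z * a) * mgf X P z :=
    hβa.trans (measure_ge_le_exp_mul_mgf a hz.le hint)
  have hmgf : 0 < mgf X P z := pos_of_mul_pos_right (hβ.trans_le chernoff) (exp_pos _).le
  rw [le_inv_mul_iff₀ hz, le_log_iff_exp_le (div_pos hmgf hβ), le_div_iff₀ hβ]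
  calc exp (z * a) * β ≤ exp (z * a) * (exp (-z * a) * mgf X P z) := by gcongr
    _ = mgf X P z := by rw [← mul_assoc, ← exp_add]; simp

lemma inv_mul_log_mgf_div_le [IsProbabilityMeasure P] {M : ℝ} (hz : 0 < z) (hβ : 0 < β)
    (hXM : ∀ᵐ ω ∂P, X ω ≤ M) (hint : Integrable (fun ω ↦ exp (z * X ω)) P) :
    z⁻¹ * log (mgf X P z / β) ≤ M + z⁻¹ * log β⁻¹ := by
  have hmgf : mgf X P z ≤ exp (z * M) := by
    calc mgf X P z ≤ ∫ _, exp (z * M) ∂P :=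
          integral_mono_ae hint (integrable_const _) (hXM.mono fun _ h ↦ by dsimp; gcongr)
      _ = exp (z * M) := by simp
  have hlog : log (mgf X P z) ≤ z * M := (log_le_iff_le_exp (mgf_pos hint)).2 hmgf
  rw [div_eq_mul_inv, log_mul (mgf_pos hint).ne' (inv_ne_zero hβ.ne'), mul_add]
  gcongr
  rwa [inv_mul_le_iff₀ hz]

lemma le_EVaR [IsFiniteMeasure P] (hβ : 0 < β) (hβa : β ≤ P.real {ω | a ≤ X ω})
    (hint : ∀ z, 0 < z → Integrable (fun ω ↦ exp (z * X ω)) P) :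
    a ≤ EVaR P β X := by
  rw [EVaR_eq_iInf_mgf]
  exact le_ciInf fun z ↦ le_inv_mul_log_mgf_div z.2 hβ hβa (hint z z.2)

lemma EVaR_le [IsProbabilityMeasure P] {M : ℝ} (hβ : 0 < β) (hβa : β ≤ P.real {ω | a ≤ X ω})
    (hXM : ∀ᵐ ω ∂P, X ω ≤ M) (hint : ∀ z, 0 < z → Integrable (fun ω ↦ exp (z * X ω)) P) :
    EVaR P β X ≤ M := by
  have hbdd : BddBelow (Set.range fun z : Set.Ioi (0 : ℝ) ↦ (z : ℝ)⁻¹ * log (mgf X P z / β)) :=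
    ⟨a, Set.forall_mem_range.2 fun z ↦ le_inv_mul_log_mgf_div z.2 hβ hβa (hint z z.2)⟩
  rw [EVaR_eq_iInf_mgf]
  refine ge_of_tendsto (f := fun z ↦ M + z⁻¹ * log β⁻¹) (x := atTop) ?_ ?_
  · simpa using (tendsto_inv_atTop_zero.mul_const (log β⁻¹)).const_add M
  · filter_upwards [eventually_gt_atTop 0] with z hz
    exact (ciInf_le hbdd ⟨z, hz⟩).trans (inv_mul_log_mgf_div_le hz hβ hXM (hint z hz))

end EVaR

lemma measureReal_setOf_le_pos_of_lt_essSup {Ω : Type*} [MeasurableSpace Ω] {P : Measure Ω}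
    [IsFiniteMeasure P] [NeZero P] {X : Ω → ℝ} {a : ℝ} (ha : a < essSup X P)
    (hX : IsBoundedUnder (· ≥ ·) (ae P) X) :
    0 < P.real {ω | a ≤ X ω} := by
  refine measureReal_nonneg.lt_of_ne' fun h ↦ ha.not_ge ?_
  have hlt : ∀ᵐ ω ∂P, X ω < a := by
    rw [ae_iff]
    simpa [measureReal_eq_zero_iff] using h
  exact essSup_le_of_ae_le a (hlt.mono fun _ h ↦ h.le) hX.isCoboundedUnder_le

open Filter in
theorem stmt_13_general {Ω : Type*} [MeasurableSpace Ω] (P : Measure Ω) [IsProbabilityMeasure P]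
    (X : Ω → ℝ) (hbdd : MemLp X ⊤ P) :
    Tendsto (fun β : ℝ => EVaR P β X) (nhdsWithin 0 (Set.Ioi 0)) (nhds (essSup X P)) := by
  obtain ⟨C, hC⟩ : ∃ C, ∀ᵐ ω ∂P, X ω ∈ Set.Icc (-C) C :=
    ⟨_, (ae_le_lpNorm_exponent_top hbdd).mono fun _ h ↦ abs_le.1 h⟩
  have hint : ∀ z, 0 < z → Integrable (fun ω ↦ exp (z * X ω)) P := fun _ _ ↦
    integrable_exp_mul_of_mem_Icc hbdd.1.aemeasurable hC
  have hXM : ∀ᵐ ω ∂P, X ω ≤ essSup X P := ae_le_essSup ⟨C, hC.mono fun _ h ↦ h.2⟩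
  have squeeze : ∀ a < essSup X P, ∀ᶠ β in 𝓝[>] 0, EVaR P β X ∈ Set.Icc a (essSup X P) := by
    intro a ha
    have hq := measureReal_setOf_le_pos_of_lt_essSup ha ⟨-C, hC.mono fun _ h ↦ h.1⟩
    filter_upwards [Ioo_mem_nhdsGT hq] with β hβ
    exact ⟨le_EVaR hβ.1 hβ.2.le hint, EVaR_le hβ.1 hβ.2.le hXM hint⟩
  refine tendsto_order.2 ⟨fun a ha ↦ ?_, fun b hb ↦ ?_⟩
  · obtain ⟨a', haa', ha'⟩ := exists_between ha
    exact (squeeze a' ha').mono fun _ h ↦ haa'.trans_le h.1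
  · exact (squeeze _ (sub_one_lt _)).mono fun _ h ↦ h.2.trans_lt hb

open Filter in
/-- `lim_{β → 0⁺} EVaR_β(X) = esssup X` for essentially bounded `X`. -/
theorem stmt_13 {Ω : Type*} [MeasurableSpace Ω] (P : Measure Ω) [IsProbabilityMeasure P]
    (X : Ω → ℝ) (hX : Measurable X) (hbdd : MemLp X ⊤ P) :
    Tendsto (fun β : ℝ => EVaR P β X) (nhdsWithin 0 (Set.Ioi 0)) (nhds (essSup X P)) :=
  stmt_13_general P X hbdd
end

section
/- Let X be an integrable real-valued random variable on a probability space (Ω, F, P) with E[exp(zX)] < ∞ for all z > 0. Then EVaR_1(X) = E[X]; that is, inf_{z > 0} z⁻¹ · ln(E[exp(zX)]) = E[X], so at risk level β = 1 the Entropic Value-at-Risk reduces to the risk-neutral expectation. -/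
/-!
Jensen's inequality gives `exp (z E[X]) ≤ E[exp (z X)]`, i.e. every term `z⁻¹ log E[exp (z X)]` of
the infimum is at least `E[X]`. Conversely `log x ≤ x - 1` bounds that term by the difference
quotient `(E[exp (z X)] - 1) / z` of the moment generating function at `0`, which tends to its
right derivative `E[X]` as `z → 0⁺` by dominated convergence.
-/

open MeasureTheory

open Filter Set Topology Real ProbabilityTheory

namespace Real

lemma le_exp_mul_sub_one_div {z : ℝ} (hz : 0 < z) (t : ℝ) : t ≤ (exp (z * t) - 1) / z := by
  rw [le_div_iff₀ hz]
  linarith [add_one_le_exp (z * t)]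

lemma exp_mul_sub_one_div_le {z u : ℝ} (hz : 0 < z) (hzu : z ≤ u) (t : ℝ) :
    (exp (z * t) - 1) / z ≤ (exp (u * t) - 1) / u := by
  have hu : 0 < u := hz.trans_le hzu
  have hconv := convexOn_exp.2 (mem_univ (u * t)) (mem_univ 0) (div_nonneg hz.le hu.le)
    (sub_nonneg.2 ((div_le_one hu).2 hzu)) (add_sub_cancel _ _)
  simp only [smul_eq_mul, mul_zero, add_zero, exp_zero, mul_one] at hconv
  rw [← mul_assoc, div_mul_cancel₀ z hu.ne'] at hconv
  rw [div_le_div_iff₀ hz hu]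
  calc (exp (z * t) - 1) * u ≤ (z / u * exp (u * t) + (1 - z / u) - 1) * u := by gcongr
  _ = (exp (u * t) - 1) * z := by field_simp; ring

lemma tendsto_exp_mul_sub_one_div (t : ℝ) :
    Tendsto (fun z => (exp (z * t) - 1) / z) (𝓝[>] 0) (𝓝 t) := by
  have hderiv : HasDerivAt (fun z => exp (z * t)) t 0 := by
    simpa using (hasDerivAt_mul_const (x := 0) t).exp
  rw [hasDerivAt_iff_tendsto_slope] at hderiv
  refine (hderiv.mono_left (nhdsWithin_mono _ fun z hz => ne_of_gt hz)).congr fun z => ?_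
  simp [slope_fun_def_field]

end Real

namespace ProbabilityTheory

variable {Ω : Type*} {m : MeasurableSpace Ω} {μ : Measure Ω} {X : Ω → ℝ} {t : ℝ}

lemma mul_integral_le_cgf [IsProbabilityMeasure μ] (hX : Integrable X μ)
    (ht : Integrable (fun ω => exp (t * X ω)) μ) : t * μ[X] ≤ cgf X μ t := by
  rw [cgf, le_log_iff_exp_le (mgf_pos ht), mgf, ← integral_const_mul]
  exact convexOn_exp.map_integral_le continuous_exp.continuousOn isClosed_univ
    (ae_of_all _ fun _ => mem_univ _) (hX.const_mul t) ht

lemma inv_mul_cgf_le_slope_mgf [IsProbabilityMeasure μ] (ht : 0 < t)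
    (hexp : Integrable (fun ω => exp (t * X ω)) μ) :
    t⁻¹ * cgf X μ t ≤ slope (mgf X μ) 0 t := by
  rw [slope_def_field, mgf_zero, sub_zero, div_eq_inv_mul]
  gcongr
  exact log_le_sub_one_of_pos (mgf_pos hexp)

lemma hasDerivWithinAt_mgf_Ioi_zero [IsFiniteMeasure μ] {u : ℝ} (hX : Integrable X μ) (hu : 0 < u)
    (hexp : Integrable (fun ω => exp (u * X ω)) μ) :
    HasDerivWithinAt (mgf X μ) μ[X] (Ioi 0) 0 := by
  rw [hasDerivWithinAt_iff_tendsto_slope' self_notMem_Ioi]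
  have hsmall : ∀ᶠ z in 𝓝[>] (0 : ℝ), z ∈ Ioc 0 u := Ioc_mem_nhdsGT hu
  have hslope : ∀ᶠ z in 𝓝[>] (0 : ℝ),
      ∫ ω, (exp (z * X ω) - 1) / z ∂μ = slope (mgf X μ) 0 z := by
    filter_upwards [hsmall] with z hz
    rw [slope_def_field, integral_div,
      integral_sub (integrable_exp_mul_of_nonneg_of_le hexp hz.1.le hz.2) (integrable_const 1),
      mgf_zero', mgf, integral_const, smul_eq_mul, mul_one, sub_zero]
  -- On `(0, u]` the difference quotient `(exp (z t) - 1) / z` lies between `t` and its value at `u`.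
  refine Tendsto.congr' hslope (tendsto_integral_filter_of_dominated_convergence
    (fun ω => |X ω| + |(exp (u * X ω) - 1) / u|) ?_ ?_ ?_ ?_)
  · exact Eventually.of_forall fun z => by fun_prop
  · filter_upwards [hsmall] with z hz
    refine ae_of_all _ fun ω => ?_
    have hlow := le_exp_mul_sub_one_div hz.1 (X ω)
    have hhigh := exp_mul_sub_one_div_le hz.1 hz.2 (X ω)
    rw [Real.norm_eq_abs, abs_le]
    constructor <;> linarith [neg_abs_le (X ω), le_abs_self ((exp (u * X ω) - 1) / u),
      abs_nonneg (X ω), abs_nonneg ((exp (u * X ω) - 1) / u)]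
  · exact hX.abs.add ((hexp.sub (integrable_const 1)).div_const u).abs
  · exact ae_of_all _ fun ω => tendsto_exp_mul_sub_one_div (X ω)

end ProbabilityTheory

lemma EVaR_one {Ω : Type*} [MeasurableSpace Ω] (P : Measure Ω) (X : Ω → ℝ) :
    EVaR P 1 X = ⨅ z : Ioi (0 : ℝ), (z : ℝ)⁻¹ * cgf X P z := by
  simp only [EVaR, div_one]
  rfl

theorem stmt_14_general {Ω : Type*} [MeasurableSpace Ω] (P : Measure Ω) [IsProbabilityMeasure P]
    (X : Ω → ℝ) (hint : Integrable X P)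
    (hmgf : ∀ z : ℝ, 0 < z → Integrable (fun ω => Real.exp (z * X ω)) P) :
    EVaR P 1 X = ∫ ω, X ω ∂P := by
  have hlower (z : Ioi (0 : ℝ)) : P[X] ≤ (z : ℝ)⁻¹ * cgf X P z :=
    (le_inv_mul_iff₀ z.2).2 (mul_integral_le_cgf hint (hmgf z z.2))
  have hbdd : BddBelow (range fun z : Ioi (0 : ℝ) => (z : ℝ)⁻¹ * cgf X P z) :=
    ⟨_, forall_mem_range.2 hlower⟩
  have hslope : Tendsto (slope (mgf X P) 0) (𝓝[>] 0) (𝓝 P[X]) :=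
    (hasDerivWithinAt_iff_tendsto_slope' self_notMem_Ioi).1
      (hasDerivWithinAt_mgf_Ioi_zero hint one_pos (hmgf 1 one_pos))
  rw [EVaR_one]
  refine le_antisymm (ge_of_tendsto hslope ?_) (le_ciInf hlower)
  filter_upwards [self_mem_nhdsWithin] with z hz
  exact (ciInf_le hbdd ⟨z, hz⟩).trans (inv_mul_cgf_le_slope_mgf hz (hmgf z hz))

/-- `EVaR_1(X) = E[X]` : at risk level `β = 1` the entropic value-at-risk
`inf_{z > 0} z⁻¹ ln E[exp(z X)]` reduces to the risk-neutral expectation. -/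
theorem stmt_14 {Ω : Type*} [MeasurableSpace Ω] (P : Measure Ω) [IsProbabilityMeasure P]
    (X : Ω → ℝ) (hX : Measurable X) (hint : Integrable X P)
    (hmgf : ∀ z : ℝ, 0 < z → Integrable (fun ω => Real.exp (z * X ω)) P) :
    EVaR P 1 X = ∫ ω, X ω ∂P :=
  stmt_14_general P X hint hmgf
end

section
/- Let (Ω, F, P) be a probability space with Ω nonempty, X : Ω → ℝ a bounded measurable function, and β ∈ (0,1). Then the total variation distance-based risk measure satisfies TVD_β(X) := sup{∫ X dQ : Q a probability measure on (Ω, F) with (1/2)·‖P − Q‖_TV ≤ 1 − β} = (1 − β)·sup_{ω ∈ Ω} X(ω) + β·CVaR_β(X), where ‖P − Q‖_TV denotes the total variation norm of the signed measure P − Q. -/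
open MeasureTheory

/-- Total variation distance between two finite measures:
`d_TV(P,Q) = (1/2) ‖P - Q‖`, half the total variation norm of the signed measure `P - Q`. -/
noncomputable def tvDist {Ω : Type*} [MeasurableSpace Ω]
    (P Q : Measure Ω) [IsFiniteMeasure P] [IsFiniteMeasure Q] : ℝ :=
  (1 / 2) * ((P.toSignedMeasure - Q.toSignedMeasure).totalVariation Set.univ).toReal

/-!
For `Q` with `tvDist P Q ≤ 1 - β`, the Jordan decomposition of `Q - P` gives `Q ≤ P + ν` with
`ν(Ω) = tvDist P Q`. Hence for every `z ≤ sup X`,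
`E_Q X ≤ z + E_Q (X - z)⁺ ≤ z + E_P (X - z)⁺ + (sup X - z)(1 - β)`, which is
`(1 - β) sup X + β (z + E_P (X - z)⁺ / β)`; for `z > sup X` this bound is trivial, and taking
the infimum over `z` gives the upper bound.

Conversely, at an upper `β`-quantile `z` of `X` there is a weight `0 ≤ w ≤ 1` with `E_P w = β`,
equal to `1` on `{X > z}` and to `0` on `{X < z}`. Then `w (X - z) = (X - z)⁺`, so `w` is optimal in
the dual description of CVaR and `β CVaR_β(X) = E_P[w X]`. The probability measure
`Q = w P + (1 - β) δ_ω` agrees with `P = w P + (1 - w) P` up to two measures of mass `1 - β`, so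
`tvDist P Q ≤ 1 - β`, and `E_Q X = β CVaR_β(X) + (1 - β) X(ω)`; letting `X(ω) → sup X` gives
the lower bound.
-/

open Set

section

variable {Ω : Type*} [MeasurableSpace Ω]

lemma Measurable.integrable_of_abs_le {μ : Measure Ω} [IsFiniteMeasure μ] {X : Ω → ℝ}
    (hX : Measurable X) {C : ℝ} (hC : ∀ ω, |X ω| ≤ C) : Integrable X μ :=
  .of_bound hX.aestronglyMeasurable C (ae_of_all _ hC)

lemma le_add_posPart_toSignedMeasure_sub (μ ν : Measure Ω) [IsFiniteMeasure μ] [IsFiniteMeasure ν] :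
    μ ≤ ν + (μ.toSignedMeasure - ν.toSignedMeasure).toJordanDecomposition.posPart := by
  set s := μ.toSignedMeasure - ν.toSignedMeasure
  refine Measure.le_iff.2 fun E hE => ?_
  have key : μ.real E - ν.real E = s.toJordanDecomposition.posPart.real E
      - s.toJordanDecomposition.negPart.real E := by
    rw [← Measure.toSignedMeasure_sub_apply hE, s.apply_eq_posPart_real_sub_negPart_real hE]
  rw [← ENNReal.toReal_le_toReal (measure_ne_top _ _) (measure_ne_top _ _), ← measureReal_def,
    ← measureReal_def, measureReal_add_apply]
  linarith [measureReal_nonneg (μ := s.toJordanDecomposition.negPart) (s := E)]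

lemma tvDist_eq_posPart_toSignedMeasure_sub (P Q : Measure Ω) [IsProbabilityMeasure P]
    [IsProbabilityMeasure Q] :
    tvDist P Q
      = (Q.toSignedMeasure - P.toSignedMeasure).toJordanDecomposition.posPart.real univ := by
  set s := Q.toSignedMeasure - P.toSignedMeasure
  have hbalanced : s.toJordanDecomposition.posPart.real univ
      = s.toJordanDecomposition.negPart.real univ := by
    have := s.apply_eq_posPart_real_sub_negPart_real MeasurableSet.univ
    rw [Measure.toSignedMeasure_sub_apply MeasurableSet.univ] at this
    simp only [probReal_univ, sub_self] at this
    linarith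
  rw [tvDist, ← neg_sub, SignedMeasure.totalVariation_neg, ← measureReal_def,
    SignedMeasure.totalVariation, measureReal_add_apply, ← hbalanced]
  ring

lemma integral_le_integral_add_mul_tvDist (P Q : Measure Ω) [IsProbabilityMeasure P]
    [IsProbabilityMeasure Q] {f : Ω → ℝ} (hf : Measurable f) {b : ℝ}
    (hf0 : ∀ ω, 0 ≤ f ω) (hfb : ∀ ω, f ω ≤ b) :
    ∫ ω, f ω ∂Q ≤ ∫ ω, f ω ∂P + b * tvDist P Q := by
  set ν := (Q.toSignedMeasure - P.toSignedMeasure).toJordanDecomposition.posPart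
  have hint : ∀ μ : Measure Ω, [IsFiniteMeasure μ] → Integrable f μ := fun _ _ =>
    hf.integrable_of_abs_le fun ω => abs_le.2 ⟨by linarith [hf0 ω, hfb ω], hfb ω⟩
  calc ∫ ω, f ω ∂Q ≤ ∫ ω, f ω ∂(P + ν) :=
        integral_mono_measure (le_add_posPart_toSignedMeasure_sub Q P) (ae_of_all _ hf0) (hint _)
    _ = ∫ ω, f ω ∂P + ∫ ω, f ω ∂ν := integral_add_measure (hint _) (hint _)
    _ ≤ ∫ ω, f ω ∂P + ∫ _, b ∂ν :=
        add_le_add_right (integral_mono (hint ν) (integrable_const b) hfb) _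
    _ = ∫ ω, f ω ∂P + b * tvDist P Q := by
        rw [integral_const, smul_eq_mul, tvDist_eq_posPart_toSignedMeasure_sub, mul_comm]

lemma tvDist_le_of_eq_add (μ₁ μ₂ ρ κ ν : Measure Ω) [IsFiniteMeasure μ₁] [IsFiniteMeasure μ₂]
    [IsFiniteMeasure ρ] [IsFiniteMeasure κ] [IsFiniteMeasure ν] (h₁ : μ₁ = ρ + ν)
    (h₂ : μ₂ = κ + ν) : tvDist μ₁ μ₂ ≤ (ρ.real univ + κ.real univ) / 2 := by
  subst h₁ h₂
  have hcancel : (ρ + ν).toSignedMeasure - (κ + ν).toSignedMeasure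
      = ρ.toSignedMeasure - κ.toSignedMeasure := by
    simp only [Measure.toSignedMeasure_add]; abel
  have hvar : ∀ μ : Measure Ω, [IsFiniteMeasure μ] → μ.toSignedMeasure.variation ≤ μ := fun μ _ =>
    VectorMeasure.variation_le_of_forall_enorm_le fun E hE => by
      rw [Measure.toSignedMeasure_apply_measurable hE, Real.enorm_of_nonneg measureReal_nonneg,
        measureReal_def, ENNReal.ofReal_toReal (measure_ne_top _ _)]
  have hle : (ρ.toSignedMeasure - κ.toSignedMeasure).totalVariation ≤ ρ + κ := by
    rw [SignedMeasure.totalVariation_eq_variation]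
    exact VectorMeasure.variation_sub_le.trans (add_le_add (hvar ρ) (hvar κ))
  have := ENNReal.toReal_mono (measure_ne_top _ _) (hle univ)
  rw [tvDist, hcancel]
  rw [← measureReal_def, ← measureReal_def, ← measureReal_add_apply] at *
  linarith

lemma measureReal_lt_le_of_forall_gt (P : Measure Ω) [IsFiniteMeasure P] {X : Ω → ℝ} {z b : ℝ}
    (h : ∀ t, z < t → P.real {ω | t < X ω} ≤ b) : P.real {ω | z < X ω} ≤ b := by
  obtain ⟨u, hu_anti, hzu, hu_lim⟩ := exists_seq_strictAnti_tendsto z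
  have hunion : {ω | z < X ω} = ⋃ n, {ω | u n < X ω} := by
    ext ω
    simp only [mem_ofPred_eq, mem_iUnion]
    refine ⟨fun hω => (hu_lim.eventually (gt_mem_nhds hω)).exists, ?_⟩
    rintro ⟨n, hn⟩
    exact (hzu n).trans hn
  have hmono : Monotone fun n => {ω | u n < X ω} := fun m n hmn ω hω =>
    (hu_anti.antitone hmn).trans_lt hω
  have hlim := (ENNReal.tendsto_toReal (measure_ne_top P _)).comp
    (tendsto_measure_iUnion_atTop hmono)
  rw [hunion]
  exact le_of_tendsto' hlim fun n => h _ (hzu n)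

lemma le_measureReal_le_of_forall_lt (P : Measure Ω) [IsFiniteMeasure P] {X : Ω → ℝ}
    (hX : Measurable X) {z b : ℝ} (h : ∀ t, t < z → b ≤ P.real {ω | t < X ω}) :
    b ≤ P.real {ω | z ≤ X ω} := by
  obtain ⟨u, hu_mono, huz, hu_lim⟩ := exists_seq_strictMono_tendsto z
  have hinter : {ω | z ≤ X ω} = ⋂ n, {ω | u n < X ω} := by
    ext ω
    simp only [mem_ofPred_eq, mem_iInter]
    refine ⟨fun hω n => (huz n).trans_le hω, fun hω => ?_⟩
    by_contra! hlt
    obtain ⟨n, hn⟩ := (hu_lim.eventually (lt_mem_nhds hlt)).exists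
    exact (hω n).not_gt hn
  have hanti : Antitone fun n => {ω | u n < X ω} := fun m n hmn ω hω =>
    (hu_mono.monotone hmn).trans_lt hω
  have hlim := (ENNReal.tendsto_toReal (measure_ne_top P _)).comp
    (tendsto_measure_iInter_atTop
      (fun _ => (measurableSet_lt measurable_const hX).nullMeasurableSet) hanti
      ⟨0, measure_ne_top P _⟩)
  rw [hinter]
  exact ge_of_tendsto' hlim fun n => h _ (huz n)

lemma exists_quantile (P : Measure Ω) [IsProbabilityMeasure P] {X : Ω → ℝ} (hX : Measurable X)
    {C : ℝ} (hC : ∀ ω, |X ω| ≤ C) {β : ℝ} (hβ : β ∈ Ioo (0 : ℝ) 1) :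
    ∃ z, P.real {ω | z < X ω} ≤ β ∧ β ≤ P.real {ω | z ≤ X ω} := by
  set S := {t : ℝ | P.real {ω | t < X ω} ≤ β}
  have hupper : ∀ t s, t ≤ s → t ∈ S → s ∈ S := fun t s hts ht =>
    (measureReal_mono fun ω (hω : s < X ω) => hts.trans_lt hω).trans ht
  have hC_mem : C ∈ S := by
    have : {ω | C < X ω} = ∅ := eq_empty_of_forall_notMem fun ω hω =>
      (hω.trans_le (le_abs_self _)).not_ge (hC ω)
    simp [S, this, hβ.1.le]
  have hbdd : BddBelow S := by
    refine ⟨-C, fun t ht => ?_⟩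
    by_contra! hlt
    have : {ω | t < X ω} = univ := eq_univ_of_forall fun ω =>
      hlt.trans_le (neg_le_of_abs_le (hC ω))
    simp only [S, mem_ofPred_eq, this, probReal_univ] at ht
    exact hβ.2.not_ge ht
  refine ⟨sInf S, measureReal_lt_le_of_forall_gt P fun t ht => ?_,
    le_measureReal_le_of_forall_lt P hX fun t ht => ?_⟩
  · obtain ⟨s, hs, hst⟩ := (csInf_lt_iff hbdd ⟨C, hC_mem⟩).1 ht
    exact hupper s t hst.le hs
  · exact le_of_lt (not_le.1 fun hmem => (csInf_le hbdd hmem).not_gt ht)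

lemma MeasureTheory.Integrable.mul_of_nonneg_of_le_one {P : Measure Ω} {X w : Ω → ℝ}
    (hX : Integrable X P) (hw : Measurable w) (hw0 : ∀ ω, 0 ≤ w ω) (hw1 : ∀ ω, w ω ≤ 1) :
    Integrable (fun ω => w ω * X ω) P :=
  hX.bdd_mul hw.aestronglyMeasurable (ae_of_all _ fun ω => by
    rw [Real.norm_of_nonneg (hw0 ω)]; exact hw1 ω)

lemma integral_mul_le_mul_integral_add_integral_max_sub {P : Measure Ω} [IsFiniteMeasure P]
    {X w : Ω → ℝ} (hX : Integrable X P) (hw : Measurable w) (hw0 : ∀ ω, 0 ≤ w ω)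
    (hw1 : ∀ ω, w ω ≤ 1) (z : ℝ) :
    ∫ ω, w ω * X ω ∂P ≤ z * ∫ ω, w ω ∂P + ∫ ω, max (X ω - z) 0 ∂P := by
  have hpointwise : ∀ ω, w ω * X ω - w ω * z ≤ max (X ω - z) 0 := fun ω => by
    rcases le_total (X ω - z) 0 with hneg | hpos
    · nlinarith [hw0 ω, le_max_right (X ω - z) 0]
    · nlinarith [hw1 ω, le_max_left (X ω - z) 0]
  have hwX := hX.mul_of_nonneg_of_le_one hw hw0 hw1
  have hwz := (integrable_const (μ := P) z).mul_of_nonneg_of_le_one hw hw0 hw1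
  have := integral_mono (f := fun ω => w ω * X ω - w ω * z) (hwX.sub hwz)
    (hX.sub (integrable_const z)).pos_part hpointwise
  rw [integral_sub hwX hwz, integral_mul_const] at this
  simp only [Pi.sub_apply] at this
  linarith

lemma CVaR_eq_integral_mul {P : Measure Ω} [IsFiniteMeasure P] {X w : Ω → ℝ} {β z : ℝ}
    (hβ : 0 < β) (hX : Integrable X P) (hw : Measurable w) (hw0 : ∀ ω, 0 ≤ w ω)
    (hw1 : ∀ ω, w ω ≤ 1) (hmass : ∫ ω, w ω ∂P = β)
    (htail : ∀ ω, w ω * (X ω - z) = max (X ω - z) 0) :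
    β * CVaR P β X = ∫ ω, w ω * X ω ∂P := by
  have hdual : ∀ t, (∫ ω, w ω * X ω ∂P) / β ≤ t + (∫ ω, max (X ω - t) 0 ∂P) / β := fun t => by
    rw [div_le_iff₀ hβ, add_mul, div_mul_cancel₀ _ hβ.ne', ← hmass]
    exact integral_mul_le_mul_integral_add_integral_max_sub hX hw hw0 hw1 t
  have hattained : z + (∫ ω, max (X ω - z) 0 ∂P) / β = (∫ ω, w ω * X ω ∂P) / β := by
    have : ∫ ω, max (X ω - z) 0 ∂P = ∫ ω, w ω * X ω ∂P - z * β := by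
      simp_rw [← htail, mul_sub]
      rw [integral_sub (hX.mul_of_nonneg_of_le_one hw hw0 hw1)
        ((integrable_const (μ := P) z).mul_of_nonneg_of_le_one hw hw0 hw1), integral_mul_const,
        hmass, mul_comm]
    rw [this]
    field_simp
    ring
  have hCVaR : CVaR P β X = (∫ ω, w ω * X ω ∂P) / β :=
    le_antisymm (hattained ▸ ciInf_le ⟨_, forall_mem_range.2 hdual⟩ z) (le_ciInf hdual)
  rw [hCVaR, mul_div_cancel₀ _ hβ.ne']

lemma exists_optimal_CVaR_weight (P : Measure Ω) [IsProbabilityMeasure P] {X : Ω → ℝ}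
    (hX : Measurable X) {β z : ℝ} (hz₁ : P.real {ω | z < X ω} ≤ β)
    (hz₂ : β ≤ P.real {ω | z ≤ X ω}) :
    ∃ w : Ω → ℝ, Measurable w ∧ (∀ ω, 0 ≤ w ω) ∧ (∀ ω, w ω ≤ 1) ∧ ∫ ω, w ω ∂P = β ∧
      ∀ ω, w ω * (X ω - z) = max (X ω - z) 0 := by
  set A := {ω | z < X ω}
  set B := {ω | X ω = z}
  have hA : MeasurableSet A := measurableSet_lt measurable_const hX
  have hB : MeasurableSet B := measurableSet_eq_fun hX measurable_const
  have hsplit : P.real {ω | z ≤ X ω} = P.real A + P.real B := by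
    have hunion : {ω | z ≤ X ω} = A ∪ B := by
      ext ω; simp only [A, B, mem_union, mem_ofPred_eq, le_iff_lt_or_eq, eq_comm]
    have hAB : Disjoint A B := disjoint_left.2 fun ω hωA hωB => ne_of_gt hωA hωB
    rw [hunion, measureReal_union (μ := P) (s₁ := A) (s₂ := B) hAB hB]
  -- if `P.real B = 0` then `c = 0` (division by zero) and `P.real A = β`
  set c := (β - P.real A) / P.real B
  have hc0 : 0 ≤ c := div_nonneg (by linarith) measureReal_nonneg
  have hc1 : c ≤ 1 := div_le_one_of_le₀ (by linarith) measureReal_nonneg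
  have hcB : c * P.real B = β - P.real A := by
    rcases eq_or_ne (P.real B) 0 with hB0 | hB0
    · simp [hB0]; linarith
    · exact div_mul_cancel₀ _ hB0
  refine ⟨fun ω => A.indicator (fun _ => 1) ω + B.indicator (fun _ => c) ω,
    (measurable_const.indicator hA).add (measurable_const.indicator hB),
    fun ω => ?_, fun ω => ?_, ?_, fun ω => ?_⟩
  · rcases lt_trichotomy (X ω) z with hlt | heq | hgt
    · simp [A, B, hlt.not_gt, hlt.ne]
    · simp [A, B, heq, hc0]
    · simp [A, B, hgt, hgt.ne']
  · rcases lt_trichotomy (X ω) z with hlt | heq | hgt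
    · simp [A, B, hlt.not_gt, hlt.ne]
    · simp [A, B, heq, hc1]
    · simp [A, B, hgt, hgt.ne']
  · rw [integral_add ((integrable_const _).indicator hA) ((integrable_const _).indicator hB),
      integral_indicator_const _ hA, integral_indicator_const _ hB, smul_eq_mul, smul_eq_mul,
      mul_one, mul_comm, hcB]
    ring
  · rcases lt_trichotomy (X ω) z with hlt | heq | hgt
    · simp [A, B, hlt.not_gt, hlt.ne, hlt.le]
    · simp [A, B, heq]
    · simp [A, B, hgt, hgt.ne', hgt.le]

lemma integral_withDensity_ofReal (P : Measure Ω) {w : Ω → ℝ} (hw : Measurable w)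
    (hw0 : ∀ ω, 0 ≤ w ω) (g : Ω → ℝ) :
    ∫ ω, g ω ∂P.withDensity (fun ω => ENNReal.ofReal (w ω)) = ∫ ω, w ω * g ω ∂P := by
  rw [integral_withDensity_eq_integral_toReal_smul hw.ennreal_ofReal
    (ae_of_all _ fun _ => ENNReal.ofReal_lt_top)]
  simp_rw [ENNReal.toReal_ofReal (hw0 _), smul_eq_mul]

lemma withDensity_ofReal_add_withDensity_ofReal_one_sub (P : Measure Ω) {w : Ω → ℝ}
    (hw : Measurable w) (hw0 : ∀ ω, 0 ≤ w ω) (hw1 : ∀ ω, w ω ≤ 1) :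
    P.withDensity (fun ω => ENNReal.ofReal (w ω))
      + P.withDensity (fun ω => ENNReal.ofReal (1 - w ω)) = P := by
  rw [← withDensity_add_left hw.ennreal_ofReal]
  conv_rhs => rw [← withDensity_one (μ := P)]
  congr 1
  funext ω
  rw [Pi.add_apply, ← ENNReal.ofReal_add (hw0 ω) (sub_nonneg.2 (hw1 ω)), add_sub_cancel,
    ENNReal.ofReal_one, Pi.one_apply]

lemma exists_tvDist_le_integral_eq (P : Measure Ω) [IsProbabilityMeasure P] {X w : Ω → ℝ}
    (hX : Measurable X) {C : ℝ} (hC : ∀ ω, |X ω| ≤ C) (hw : Measurable w) (hw0 : ∀ ω, 0 ≤ w ω)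
    (hw1 : ∀ ω, w ω ≤ 1) {β : ℝ} (hmass : ∫ ω, w ω ∂P = β) (hβ : β ≤ 1) (ω₀ : Ω) :
    ∃ Q : Measure Ω, ∃ _ : IsProbabilityMeasure Q,
      tvDist P Q ≤ 1 - β ∧ ∫ ω, X ω ∂Q = ∫ ω, w ω * X ω ∂P + (1 - β) * X ω₀ := by
  set ν := P.withDensity (fun ω => ENNReal.ofReal (w ω))
  set ρ := P.withDensity (fun ω => ENNReal.ofReal (1 - w ω))
  set κ := ENNReal.ofReal (1 - β) • Measure.dirac ω₀
  have hP : P = ν + ρ := (withDensity_ofReal_add_withDensity_ofReal_one_sub P hw hw0 hw1).symm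
  have : IsFiniteMeasure ν := isFiniteMeasure_of_le P (hP ▸ Measure.le_add_right le_rfl)
  have : IsFiniteMeasure ρ := isFiniteMeasure_of_le P (hP ▸ Measure.le_add_left le_rfl)
  have hν : ν.real univ = β := by
    simpa [hmass] using integral_withDensity_ofReal P hw hw0 fun _ => 1
  have hρ : ρ.real univ = 1 - β := by
    have := congrArg (fun μ : Measure Ω => μ.real univ) hP
    rw [probReal_univ, measureReal_add_apply, hν] at this
    linarith
  have : IsFiniteMeasure κ := ⟨by simp [κ]⟩
  have hκ : κ.real univ = 1 - β := by simp [κ, sub_nonneg.2 hβ]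
  have : IsProbabilityMeasure (ν + κ) := by
    rw [isProbabilityMeasure_iff_real, measureReal_add_apply, hν, hκ]
    ring
  refine ⟨ν + κ, this, ?_, ?_⟩
  · have := tvDist_le_of_eq_add P (ν + κ) ρ κ ν (hP.trans (add_comm _ _)) (add_comm _ _)
    rw [hρ, hκ] at this
    linarith
  · rw [integral_add_measure (hX.integrable_of_abs_le hC) (hX.integrable_of_abs_le hC),
      integral_withDensity_ofReal P hw hw0,
      integral_smul_measure, integral_dirac' X ω₀ hX.stronglyMeasurable,
      ENNReal.toReal_ofReal (sub_nonneg.2 hβ), smul_eq_mul]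

lemma integral_le_add_integral_max_sub_zero {μ : Measure Ω} [IsProbabilityMeasure μ] {X : Ω → ℝ}
    (hX : Integrable X μ) (z : ℝ) : ∫ ω, X ω ∂μ ≤ z + ∫ ω, max (X ω - z) 0 ∂μ := by
  have := integral_mono (f := fun ω => X ω - z) (hX.sub (integrable_const z))
    (hX.sub (integrable_const z)).pos_part fun ω => le_max_left (X ω - z) 0
  rw [integral_sub hX (integrable_const z), integral_const, probReal_univ, one_smul] at this
  simp only [Pi.sub_apply] at this
  linarith

lemma integral_le_of_tvDist_le (P Q : Measure Ω) [IsProbabilityMeasure P] [IsProbabilityMeasure Q]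
    {X : Ω → ℝ} (hX : Measurable X) {C : ℝ} (hC : ∀ ω, |X ω| ≤ C) {M : ℝ} (hM : ∀ ω, X ω ≤ M)
    {β : ℝ} (hβ : 0 < β) (hQ : tvDist P Q ≤ 1 - β) :
    ∫ ω, X ω ∂Q ≤ (1 - β) * M + β * CVaR P β X := by
  have hobjective : ∀ z, ∫ ω, X ω ∂Q ≤ (1 - β) * M + β * z + ∫ ω, max (X ω - z) 0 ∂P := by
    intro z
    have hpos : 0 ≤ ∫ ω, max (X ω - z) 0 ∂P := integral_nonneg fun ω => le_max_right _ _
    rcases le_total z M with hzM | hMz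
    · have hsplit := integral_le_add_integral_max_sub_zero (μ := Q) (hX.integrable_of_abs_le hC) z
      have htv := integral_le_integral_add_mul_tvDist P Q (f := fun ω => max (X ω - z) 0)
        ((hX.sub measurable_const).max measurable_const) (fun ω => le_max_right _ _)
        fun ω => max_le (by linarith [hM ω]) (sub_nonneg.2 hzM)
      nlinarith
    · have : ∫ ω, X ω ∂Q ≤ M := by
        simpa using integral_mono (μ := Q) (hX.integrable_of_abs_le hC) (integrable_const M) hM
      nlinarith
  have hCVaR : (∫ ω, X ω ∂Q - (1 - β) * M) / β ≤ CVaR P β X := le_ciInf fun z => by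
    rw [div_le_iff₀ hβ, add_mul, div_mul_cancel₀ _ hβ.ne']
    linarith [hobjective z]
  rw [div_le_iff₀ hβ] at hCVaR
  linarith

end

/-- The total variation distance-based risk measure satisfies
`TVD_β(X) = (1-β) sup_ω X(ω) + β CVaR_β(X)`. -/
theorem stmt_15 {Ω : Type*} [MeasurableSpace Ω] [Nonempty Ω]
    (P : Measure Ω) [IsProbabilityMeasure P]
    (X : Ω → ℝ) (hX : Measurable X) (hbdd : ∃ C : ℝ, ∀ ω, |X ω| ≤ C)
    {β : ℝ} (hβ : β ∈ Set.Ioo (0 : ℝ) 1) :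
    sSup {r : ℝ | ∃ Q : Measure Ω, ∃ _ : IsProbabilityMeasure Q,
        tvDist P Q ≤ 1 - β ∧ r = ∫ ω, X ω ∂Q}
      = (1 - β) * (⨆ ω, X ω) + β * CVaR P β X := by
  obtain ⟨C, hC⟩ := hbdd
  have hXbdd : BddAbove (range X) := ⟨C, forall_mem_range.2 fun ω => (abs_le.1 (hC ω)).2⟩
  obtain ⟨z, hz₁, hz₂⟩ := exists_quantile P hX hC hβ
  obtain ⟨w, hw, w0, w1, hmass, htail⟩ := exists_optimal_CVaR_weight P hX hz₁ hz₂
  have hCVaR := CVaR_eq_integral_mul hβ.1 (hX.integrable_of_abs_le hC) hw w0 w1 hmass htail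
  have hattained : ∀ ω₀, (1 - β) * X ω₀ + β * CVaR P β X ∈ {r : ℝ | ∃ Q : Measure Ω,
      ∃ _ : IsProbabilityMeasure Q, tvDist P Q ≤ 1 - β ∧ r = ∫ ω, X ω ∂Q} := fun ω₀ => by
    obtain ⟨Q, hQ, htv, hQX⟩ := exists_tvDist_le_integral_eq P hX hC hw w0 w1 hmass hβ.2.le ω₀
    exact ⟨Q, hQ, htv, by rw [hQX, hCVaR]; ring⟩
  refine IsLUB.csSup_eq ⟨?_, fun b hb => ?_⟩ ⟨_, hattained (Classical.arbitrary Ω)⟩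
  · rintro _ ⟨Q, _, htv, rfl⟩
    exact integral_le_of_tvDist_le P Q hX hC (le_ciSup hXbdd) hβ.1 htv
  · have hsup : (⨆ ω, X ω) ≤ (b - β * CVaR P β X) / (1 - β) := ciSup_le fun ω => by
      rw [le_div_iff₀ (sub_pos.2 hβ.2)]
      linarith [hb (hattained ω)]
    rw [le_div_iff₀ (sub_pos.2 hβ.2)] at hsup
    linarith
end
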